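/- Let n ≥ 1 and let P be a finite poset with Aut(P) cyclic of order n, generated by g. If 3 exactly divides n and 2 exactly divides n, then Σ_{α ∈ g} (2·w₂(α) + 3·w₃(α)) ≥ 11, where the sum ranges over all cycles α of g. -/

import Mathlib

/-- A prime power `q = p^r` exactly divides `n` if `q ∣ n` and `p^(r+1) = q * p ∤ n`. -/
def ExactDvd (q n : ℕ) : Prop := q ∣ n ∧ ¬ (q * q.minFac ∣ n)

/-- The orbit of `x` under the cyclic group generated by the automorphism `g`. -/
def orbit {P : Type} [PartialOrder P] (g : P ≃o P) (x : P) : Set P :=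
  {y | ∃ m : ℤ, (g ^ m) x = y}

/-- The cycles of the automorphism `g`: the orbits of `⟨g⟩` of cardinality at least `2`. -/
def cycles {P : Type} [PartialOrder P] (g : P ≃o P) : Set (Set P) :=
  {A | (∃ x : P, A = orbit g x) ∧ 2 ≤ A.ncard}

open scoped Classical

/-- The weight `w_q(α)` of the prime power `q` in a cycle `α` of length `l`, for a
generator of a cyclic automorphism group of order `n`.  Any weight not explicitly
assigned is `0`.
* Exception 6 (`l = 6`): if `3 ∥ n` then `w₃ = 2`; else if `2 ∥ n` then `w₂ = 3`;
  else `w₄ = 3/2`.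
* Exception 12 (`l = 12`): if `3 ∥ n` then `w₃ = 4`; else `w₄ = 3`.
* Exception 10-14 (`l = 2p`, `p = 5, 7`): if `2 ∥ n` then `w₂ = 1`, otherwise
  `w₄ = 1/2`; in either case `w_p = 2(p-1)/p`.
* General case (`l = p₁^{r₁}⋯p_k^{r_k} ∉ {6,10,12,14}`): `w_{p_i^{r_i}} = (l/p_i^{r_i})/k`,
  except that if `p_i^{r_i} = 2` and `2 ∦ n` then `w₂ = 0` and `w₄ = (l/2)/(2k)`. -/
noncomputable def w (n l q : ℕ) : ℚ :=
  if l = 6 then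
    (if ExactDvd 3 n then (if q = 3 then 2 else 0)
     else if ExactDvd 2 n then (if q = 2 then 3 else 0)
     else (if q = 4 then 3/2 else 0))
  else if l = 12 then
    (if ExactDvd 3 n then (if q = 3 then 4 else 0)
     else (if q = 4 then 3 else 0))
  else if l = 10 then
    (if q = 5 then 8/5
     else if ExactDvd 2 n then (if q = 2 then 1 else 0)
     else (if q = 4 then 1/2 else 0))
  else if l = 14 then
    (if q = 7 then 12/7
     else if ExactDvd 2 n then (if q = 2 then 1 else 0)
     else (if q = 4 then 1/2 else 0))
  else
    if IsPrimePow q ∧ ExactDvd q l ∧ ¬ (q = 2 ∧ ¬ ExactDvd 2 n) then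
      ((l : ℚ) / q) / (l.primeFactors.card : ℚ)
    else if q = 4 ∧ ¬ ExactDvd 2 n ∧ ExactDvd 2 l then
      ((l : ℚ) / 2) / (2 * (l.primeFactors.card : ℚ))
    else 0

namespace WTT
variable {P : Type} [PartialOrder P]

noncomputable instance fintypeOI [Fintype P] : Finite (P ≃o P) :=
  Finite.of_injective (fun f => (f : P ≃ P)) (fun a b h => by
    ext z; exact congrFun (congrArg (⇑) h) z)

lemma one_apply (x : P) : (1 : P ≃o P) x = x := rfl

lemma apply_zpow_add (g : P ≃o P) (m k : ℤ) (x : P) :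
    (g ^ (m + k)) x = (g ^ m) ((g ^ k) x) := by rw [zpow_add]; rfl

lemma cancel_zpow {g : P ≃o P} {c : ℤ} {x y : P} (h : (g ^ c) x = (g ^ c) y) : x = y := by
  have h3 := congrArg (g ^ (-c)) h
  rwa [← apply_zpow_add, ← apply_zpow_add, neg_add_cancel, zpow_zero, one_apply, one_apply] at h3

lemma fix_zpow {g : P ≃o P} {c : ℤ} {x : P} (h : (g ^ c) x = x) (q : ℤ) :
    (g ^ (c * q)) x = x := by
  induction q using Int.induction_on with
  | zero => simp [one_apply]
  | succ k ih => rw [mul_add, mul_one, apply_zpow_add, h, ih]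
  | pred k ih =>
      apply cancel_zpow (c := c)
      rw [← apply_zpow_add]
      have : c + c * (-↑k - 1) = c * (-↑k) := by ring
      rw [this, ih, h]

lemma fix_dvd {g : P ≃o P} {c m : ℤ} {x : P} (h : (g ^ c) x = x) (hd : c ∣ m) :
    (g ^ m) x = x := by
  obtain ⟨q, rfl⟩ := hd; exact fix_zpow h q

variable [Fintype P]

/-- exists positive period -/
lemma exists_period (g : P ≃o P) (x : P) : ∃ k : ℕ, 0 < k ∧ (g ^ (k : ℤ)) x = x := by
  rcases (isOfFinOrder_of_finite g).exists_pow_eq_one with ⟨k, hk, h1⟩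
  refine ⟨k, hk, ?_⟩
  rw [zpow_natCast, h1, one_apply]

/-- the period of a point -/
noncomputable def sp (g : P ≃o P) (x : P) : ℕ := Nat.find (exists_period g x)

lemma sp_pos (g : P ≃o P) (x : P) : 0 < sp g x := (Nat.find_spec (exists_period g x)).1

lemma sp_fix (g : P ≃o P) (x : P) : (g ^ (sp g x : ℤ)) x = x := (Nat.find_spec (exists_period g x)).2

lemma sp_min (g : P ≃o P) {x : P} {k : ℕ} (hk : 0 < k) (h : (g ^ (k : ℤ)) x = x) : sp g x ≤ k :=
  Nat.find_le ⟨hk, h⟩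

lemma fix_iff_dvd (g : P ≃o P) (x : P) (m : ℤ) : (g ^ m) x = x ↔ (sp g x : ℤ) ∣ m := by
  constructor
  · intro h
    set s : ℤ := (sp g x : ℤ) with hs
    have hspos : (0:ℤ) < s := by rw [hs]; exact_mod_cast (sp_pos g x)
    have hdecomp : m = s * (m / s) + m % s := (Int.mul_ediv_add_emod m s).symm
    have h1 : (g ^ (s * (m / s))) x = x := fix_zpow (sp_fix g x) _
    have hr : (g ^ (m % s)) x = x := by
      have h2 : (g ^ (s * (m / s))) ((g ^ (m % s)) x) = (g ^ (s * (m/s))) x := by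
        rw [← apply_zpow_add, ← hdecomp, h, h1]
      exact cancel_zpow h2
    -- m % s = 0, else contradicts minimality
    have hnonneg : 0 ≤ m % s := Int.emod_nonneg m (ne_of_gt hspos)
    have hlt : m % s < s := Int.emod_lt_of_pos m hspos
    rcases eq_or_lt_of_le hnonneg with h0 | hpos
    · have : s ∣ m := by
        rw [Int.dvd_iff_emod_eq_zero]; omega
      exact this
    · exfalso
      set r : ℕ := (m % s).toNat with hrdef
      have hrcast : (r : ℤ) = m % s := Int.toNat_of_nonneg hnonneg
      have : sp g x ≤ r := sp_min g (by omega) (by rw [hrcast]; exact hr)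
      omega
  · exact fun h => fix_dvd (sp_fix g x) h

lemma eq_iff_dvd_sub (g : P ≃o P) (x : P) (a b : ℤ) :
    (g ^ a) x = (g ^ b) x ↔ (sp g x : ℤ) ∣ a - b := by
  rw [← fix_iff_dvd g x]
  constructor
  · intro h
    apply cancel_zpow (c := b)
    rw [← apply_zpow_add]
    have : b + (a - b) = a := by ring
    rw [this, h]
  · intro h
    have h' : (g ^ (a-b)) x = x := h
    have := congrArg (g ^ (b:ℤ)) h'
    rw [← apply_zpow_add] at this
    have hb : b + (a - b) = a := by ring
    rw [hb] at this
    exact this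


variable {P : Type} [PartialOrder P] [Fintype P]

lemma mem_orbit_self (g : P ≃o P) (x : P) : x ∈ orbit g x := ⟨0, by simp [one_apply]⟩

lemma mem_orbit_zpow (g : P ≃o P) (x : P) (m : ℤ) : (g ^ m) x ∈ orbit g x := ⟨m, rfl⟩

lemma orbit_eq_of_mem {g : P ≃o P} {x y : P} (h : y ∈ orbit g x) : orbit g y = orbit g x := by
  obtain ⟨m, rfl⟩ := h
  ext z
  constructor
  · rintro ⟨k, rfl⟩; exact ⟨k + m, by rw [apply_zpow_add]⟩
  · rintro ⟨k, rfl⟩; exact ⟨k - m, by rw [← apply_zpow_add, sub_add_cancel]⟩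

lemma sp_zpow (g : P ≃o P) (x : P) (m : ℤ) : sp g ((g ^ m) x) = sp g x := by
  have key : ∀ k : ℤ, (g ^ k) ((g ^ m) x) = (g ^ m) x ↔ (g ^ k) x = x := by
    intro k
    constructor
    · intro h
      rw [← apply_zpow_add] at h
      have h2 : (g ^ (k + m)) x = (g ^ (m + k)) x := by rw [add_comm]
      rw [h2, apply_zpow_add] at h
      have := cancel_zpow h
      exact this
    · intro h
      rw [← apply_zpow_add, add_comm, apply_zpow_add, h]
  apply le_antisymm
  · exact sp_min g (sp_pos g x) ((key _).2 (sp_fix g x))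
  · exact sp_min g (sp_pos g ((g^m) x)) ((key _).1 (sp_fix g ((g^m) x)))

lemma sp_eq_of_mem_orbit {g : P ≃o P} {x y : P} (h : y ∈ orbit g x) : sp g y = sp g x := by
  obtain ⟨m, rfl⟩ := h; exact sp_zpow g x m

lemma orbit_finset (g : P ≃o P) (x : P) :
    orbit g x = ↑((Finset.range (sp g x)).image (fun k : ℕ => (g ^ (k:ℤ)) x)) := by
  ext y
  simp only [Finset.coe_image, Set.mem_image, Finset.mem_coe, Finset.mem_range]
  constructor
  · rintro ⟨m, rfl⟩
    have hspos : (0:ℤ) < (sp g x : ℤ) := by exact_mod_cast (sp_pos g x)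
    have h1 : m % (sp g x : ℤ) < (sp g x : ℤ) := Int.emod_lt_of_pos m hspos
    have h0 : 0 ≤ m % (sp g x : ℤ) := Int.emod_nonneg m (ne_of_gt hspos)
    refine ⟨(m % (sp g x : ℤ)).toNat, by omega, ?_⟩
    rw [(eq_iff_dvd_sub g x _ _)]
    rw [Int.toNat_of_nonneg h0]
    have hdm : m % (sp g x : ℤ) - m = -((sp g x : ℤ) * (m / (sp g x : ℤ))) := by
      have := Int.mul_ediv_add_emod m (sp g x : ℤ); omega
    rw [hdm]
    exact Int.dvd_neg.2 ⟨m / (sp g x : ℤ), rfl⟩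
  · rintro ⟨k, _, rfl⟩; exact ⟨k, rfl⟩

lemma orbit_ncard (g : P ≃o P) (x : P) : (orbit g x).ncard = sp g x := by
  rw [orbit_finset, Set.ncard_coe_finset]
  rw [Finset.card_image_of_injOn, Finset.card_range]
  intro a ha b hb hab
  simp only [Finset.mem_coe, Finset.mem_range] at ha hb
  rw [eq_iff_dvd_sub] at hab
  have hz : (a:ℤ) - b = 0 := Int.eq_zero_of_abs_lt_dvd hab (by
    rw [abs_sub_lt_iff]; constructor <;> [skip; skip] <;> push_cast <;> omega)
  omega

/-- orbits are antichains -/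
lemma antichain_orbit {g : P ≃o P} {x : P} {m : ℤ} (h : x ≤ (g ^ m) x) : x = (g ^ m) x := by
  set f : P ≃o P := g ^ m with hf
  have hmono : ∀ a b : P, a ≤ b → f a ≤ f b := fun a b hab => f.monotone hab
  -- chain: f^[j] x ≤ f^[j+1] x
  have hsucc : ∀ c : ℤ, (f ^ (c+1)) x = f ((f ^ c) x) := by
    intro c
    rw [show c+1 = 1+c by ring, apply_zpow_add, zpow_one]
  have hiter : ∀ j : ℕ, (f ^ (j:ℤ)) x ≤ (f ^ ((j:ℤ)+1)) x := by
    intro j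
    induction j with
    | zero => simpa [one_apply] using h
    | succ i ih =>
        push_cast
        rw [hsucc ((i:ℤ)+1), show ((i:ℤ)+1) = (i:ℤ)+1 from rfl, hsucc (i:ℤ)]
        exact hmono _ _ (by rw [← hsucc (i:ℤ)]; exact ih)
  have hchain : ∀ j : ℕ, x ≤ (f ^ (j:ℤ)) x := by
    intro j
    induction j with
    | zero => simp [one_apply]
    | succ i ih => exact le_trans ih (by push_cast; exact hiter i)
  -- f x ≤ f^k x for the order k of f
  have hchain2 : ∀ j : ℕ, (f^(1:ℤ)) x ≤ (f ^ ((j:ℤ)+1)) x := by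
    intro j
    induction j with
    | zero => simp
    | succ i ih => exact le_trans ih (by push_cast; push_cast at ih ⊢; exact hiter (i+1))
  have hs := sp_fix f x
  have hsp := sp_pos f x
  have : (f^(1:ℤ)) x ≤ x := by
    have h2 := hchain2 (sp f x - 1)
    have : ((sp f x - 1 : ℕ) : ℤ) + 1 = (sp f x : ℤ) := by omega
    rwa [this, hs] at h2
  have hfx : f x = (f^(1:ℤ)) x := by rw [zpow_one]
  rw [hf] at hfx ⊢
  exact le_antisymm h (by rw [show (g^m) x = ((g^m)^(1:ℤ)) x from by rw [zpow_one]]; exact this)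

/-- comparable elements in the same orbit are equal -/
lemma eq_of_le_same_orbit {g : P ≃o P} {x y : P} (hxy : x ≤ y) (ho : y ∈ orbit g x) : x = y := by
  obtain ⟨m, rfl⟩ := ho; exact antichain_orbit hxy

/-- Lemma F : transfer of comparability -/
lemma transfer {g : P ≃o P} {x y : P} (hxy : x ≤ y) {p q : ℤ}
    (hd : ((Nat.gcd (sp g x) (sp g y)) : ℤ) ∣ p - q) : (g ^ p) x ≤ (g ^ q) y := by
  obtain ⟨k, hk⟩ := hd
  have hbez : ((Nat.gcd (sp g x) (sp g y)) : ℤ)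
      = (sp g x) * Nat.gcdA (sp g x) (sp g y) + (sp g y) * Nat.gcdB (sp g x) (sp g y) :=
    Nat.gcd_eq_gcd_ab _ _
  set a := Nat.gcdA (sp g x) (sp g y)
  set b := Nat.gcdB (sp g x) (sp g y)
  -- p = q + k(sx a + sy b)
  have hx1 : (g ^ p) x = (g ^ (q + k * ((sp g y) * b))) x := by
    rw [eq_iff_dvd_sub]
    have : p - (q + k * ((sp g y) * b)) = k * ((sp g x) * a) := by
      rw [← sub_sub, hk, hbez]; ring
    rw [this]
    exact ⟨k * a, by ring⟩
  have hy1 : y = (g ^ (k * ((sp g y) * b))) y := by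
    symm
    exact fix_dvd (sp_fix g y) ⟨k * b, by ring⟩
  rw [hx1, apply_zpow_add]
  calc (g^(q:ℤ)) ((g ^ (k * ((sp g y) * b))) x)
      ≤ (g^(q:ℤ)) ((g ^ (k * ((sp g y) * b))) y) := by
        apply (g^(q:ℤ)).monotone; apply (g ^ (k * ((sp g y) * b))).monotone; exact hxy
    _ = (g^(q:ℤ)) y := by rw [← hy1]


lemma zmod3_cases : ∀ s : ZMod 3, s = 0 ∨ s = 1 ∨ s = 2 := by decide

lemma exists_refl (S : Set (ZMod 3)) : ∃ t : ZMod 3, ∀ s ∈ S, t - s ∈ S := by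
  have e01 : (0:ZMod 3) - 1 = 2 := by decide
  have e02 : (0:ZMod 3) - 2 = 1 := by decide
  have e10 : (1:ZMod 3) - 0 = 1 := by decide
  have e11 : (1:ZMod 3) - 1 = 0 := by decide
  have e12 : (1:ZMod 3) - 2 = 2 := by decide
  have e20 : (2:ZMod 3) - 0 = 2 := by decide
  have e21 : (2:ZMod 3) - 1 = 1 := by decide
  have e22 : (2:ZMod 3) - 2 = 0 := by decide
  have e00 : (0:ZMod 3) - 0 = 0 := by decide
  by_cases h0 : (0:ZMod 3) ∈ S <;> by_cases h1 : (1:ZMod 3) ∈ S <;> by_cases h2 : (2:ZMod 3) ∈ S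
  · refine ⟨0, fun s hs => ?_⟩
    rcases zmod3_cases s with rfl|rfl|rfl
    · rwa [e00]
    · rw [e01]; exact h2
    · rw [e02]; exact h1
  · refine ⟨1, fun s hs => ?_⟩
    rcases zmod3_cases s with rfl|rfl|rfl
    · rw [e10]; exact h1
    · rw [e11]; exact h0
    · exact absurd hs h2
  · refine ⟨2, fun s hs => ?_⟩
    rcases zmod3_cases s with rfl|rfl|rfl
    · rw [e20]; exact h2
    · exact absurd hs h1
    · rw [e22]; exact h0
  · refine ⟨0, fun s hs => ?_⟩
    rcases zmod3_cases s with rfl|rfl|rfl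
    · rwa [e00]
    · exact absurd hs h1
    · exact absurd hs h2
  · refine ⟨0, fun s hs => ?_⟩
    rcases zmod3_cases s with rfl|rfl|rfl
    · exact absurd hs h0
    · rw [e01]; exact h2
    · rw [e02]; exact h1
  · refine ⟨2, fun s hs => ?_⟩
    rcases zmod3_cases s with rfl|rfl|rfl
    · exact absurd hs h0
    · rw [e21]; exact h1
    · exact absurd hs h2
  · refine ⟨1, fun s hs => ?_⟩
    rcases zmod3_cases s with rfl|rfl|rfl
    · exact absurd hs h0
    · exact absurd hs h1
    · rw [e12]; exact h2
  · refine ⟨0, fun s hs => ?_⟩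
    rcases zmod3_cases s with rfl|rfl|rfl
    · exact absurd hs h0
    · exact absurd hs h1
    · exact absurd hs h2

/-- class of x in the orbit of a, modulo 3 -/
noncomputable def cls (g : P ≃o P) (a : P) (x : P) : ZMod 3 :=
  if h : x ∈ orbit g a then ((h.choose : ℤ) : ZMod 3) else 0

lemma cls_spec {g : P ≃o P} {a : P} (h3a : 3 ∣ sp g a) {x : P} (hx : x ∈ orbit g a)
    {m : ℤ} (hm : (g ^ m) a = x) : cls g a x = ((m : ℤ) : ZMod 3) := by
  rw [cls, dif_pos hx]
  have hc : (g ^ (hx.choose : ℤ)) a = x := hx.choose_spec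
  have heq : (g ^ (hx.choose : ℤ)) a = (g ^ m) a := by rw [hc, hm]
  rw [eq_iff_dvd_sub] at heq
  have hd3 : (3:ℤ) ∣ hx.choose - m := dvd_trans (by exact_mod_cast h3a) heq
  have hz := (ZMod.intCast_zmod_eq_zero_iff_dvd (hx.choose - m) 3).2 hd3
  push_cast at hz
  linear_combination hz

lemma cls_self {g : P ≃o P} {a : P} (h3a : 3 ∣ sp g a) : cls g a a = 0 := by
  have := cls_spec h3a (mem_orbit_self g a) (m := 0) (by simp [one_apply])
  simpa using this

lemma cls_zpow {g : P ≃o P} {a : P} (h3a : 3 ∣ sp g a) {x : P} (hx : x ∈ orbit g a) (m : ℤ) :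
    cls g a ((g ^ m) x) = cls g a x + (m : ZMod 3) := by
  obtain ⟨p, hp⟩ : ∃ p : ℤ, (g ^ p) a = x := (by exact hx)
  have h1 : (g ^ (m + p)) a = (g ^ m) x := by rw [apply_zpow_add, hp]
  have h2 := cls_spec h3a (by rw [← h1]; exact mem_orbit_zpow g a (m+p)) h1
  have h3 := cls_spec h3a hx hp
  rw [h2, h3]
  push_cast
  ring

/-- the exponent of the candidate extra automorphism -/
noncomputable def delta (g : P ≃o P) (a b : P) (t : ZMod 3) (x : P) : ℤ :=
  if x ∈ orbit g a then
    ((sp g a / 3 : ℕ) : ℤ) * (((((sp g a / 3 : ℕ) : ZMod 3))⁻¹ * (t - 2 * cls g a x)).val : ℤ)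
  else if x ∈ orbit g b then
    ((sp g b / 3 : ℕ) : ℤ) * (((((sp g b / 3 : ℕ) : ZMod 3))⁻¹ * (0 - 2 * cls g b x)).val : ℤ)
  else 0

lemma unit_third {s : ℕ} (h3 : 3 ∣ s) (h9 : ¬ 9 ∣ s) : ((s / 3 : ℕ) : ZMod 3) ≠ 0 := by
  intro h
  rw [ZMod.natCast_eq_zero_iff] at h
  exact h9 (by obtain ⟨c, hc⟩ := h; obtain ⟨d, hd⟩ := h3; exact ⟨c, by omega⟩)

lemma cast_prod_val (u : ℕ) (r : ZMod 3) :
    (((u : ℤ) * ((r.val : ℕ) : ℤ) : ℤ) : ZMod 3) = (u : ZMod 3) * r := by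
  rw [Int.cast_mul, Int.cast_natCast, Int.cast_natCast, ZMod.natCast_rightInverse _]

lemma delta_cast_a {g : P ≃o P} {a b : P} {t : ZMod 3}
    (h3a : 3 ∣ sp g a) (h9a : ¬ 9 ∣ sp g a) {x : P} (hx : x ∈ orbit g a) :
    ((delta g a b t x : ℤ) : ZMod 3) = t - 2 * cls g a x := by
  rw [delta, if_pos hx, cast_prod_val, ← mul_assoc, mul_inv_cancel₀ (unit_third h3a h9a), one_mul]

lemma delta_cast_b {g : P ≃o P} {a b : P} {t : ZMod 3}
    (h3b : 3 ∣ sp g b) (h9b : ¬ 9 ∣ sp g b) {x : P} (hxa : x ∉ orbit g a)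
    (hx : x ∈ orbit g b) :
    ((delta g a b t x : ℤ) : ZMod 3) = - (2 * cls g b x) := by
  rw [delta, if_neg hxa, if_pos hx, cast_prod_val, ← mul_assoc,
    mul_inv_cancel₀ (unit_third h3b h9b), one_mul]
  ring

lemma delta_dvd_a {g : P ≃o P} {a b : P} {t : ZMod 3} {x : P} (hx : x ∈ orbit g a) :
    ((sp g a / 3 : ℕ) : ℤ) ∣ delta g a b t x := by
  rw [delta, if_pos hx]; exact dvd_mul_right _ _

lemma delta_dvd_b {g : P ≃o P} {a b : P} {t : ZMod 3} {x : P} (hxa : x ∉ orbit g a)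
    (hx : x ∈ orbit g b) :
    ((sp g b / 3 : ℕ) : ℤ) ∣ delta g a b t x := by
  rw [delta, if_neg hxa, if_pos hx]; exact dvd_mul_right _ _

lemma delta_zero {g : P ≃o P} {a b : P} {t : ZMod 3} {x : P} (hxa : x ∉ orbit g a)
    (hxb : x ∉ orbit g b) : delta g a b t x = 0 := by
  rw [delta, if_neg hxa, if_neg hxb]

/-- combine : if 3 ∣ D and s/3 ∣ D then s ∣ D -/
lemma dvd_combine {s : ℕ} (h3 : 3 ∣ s) (h9 : ¬ 9 ∣ s) {D : ℤ}
    (hd3 : (3:ℤ) ∣ D) (hds : ((s / 3 : ℕ) : ℤ) ∣ D) : (s : ℤ) ∣ D := by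
  have hcop : Nat.Coprime 3 (s / 3) := by
    refine (Nat.Prime.coprime_iff_not_dvd (by norm_num)).2 ?_
    intro h
    exact h9 (by obtain ⟨c, hc⟩ := h; obtain ⟨d, hd⟩ := h3; exact ⟨c, by omega⟩)
  have hmd := (Nat.isCoprime_iff_coprime.2 hcop).mul_dvd hd3 hds
  have hs : (s : ℤ) = 3 * ((s / 3 : ℕ) : ℤ) := by
    obtain ⟨d, hd⟩ := h3; push_cast [hd]; omega
  rwa [hs]


lemma nat_div3 {d s : ℕ} (hds : d ∣ s) (h3 : 3 ∣ s) (hd3 : ¬ (3 ∣ d)) : d ∣ s / 3 := by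
  have hcop : Nat.Coprime d 3 :=
    Nat.Coprime.symm ((Nat.Prime.coprime_iff_not_dvd (by norm_num)).2 hd3)
  have hs : s = (s / 3) * 3 := by omega
  exact hcop.dvd_of_dvd_mul_right (by rw [← hs]; exact hds)

lemma no_small_three (g : P ≃o P) (hgen : ∀ ψ : P ≃o P, ∃ m : ℤ, g ^ m = ψ)
    (a b : P)
    (h3a : 3 ∣ sp g a) (h9a : ¬ 9 ∣ sp g a) (h3b : 3 ∣ sp g b) (h9b : ¬ 9 ∣ sp g b)
    (hcov : ∀ x : P, 3 ∣ sp g x → x ∈ orbit g a ∨ x ∈ orbit g b)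
    (hgcd : orbit g a ≠ orbit g b → Nat.gcd (sp g a) (sp g b) = 3) : False := by
  classical
  set A := orbit g a with hA
  set B := orbit g b with hB
  -- class transfer, A-below-B direction
  have ctAB : A ≠ B → ∀ x1 ∈ A, ∀ y1 ∈ B, x1 ≤ y1 → ∀ x2 ∈ A, ∀ y2 ∈ B,
      cls g a x2 - cls g b y2 = cls g a x1 - cls g b y1 → x2 ≤ y2 := by
    intro hAB x1 hx1 y1 hy1 hxy x2 hx2 y2 hy2 hcls
    obtain ⟨p, hp⟩ : ∃ p : ℤ, (g ^ p) x1 = x2 := by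
      have : x2 ∈ orbit g x1 := by rw [orbit_eq_of_mem hx1]; exact hx2
      exact this
    obtain ⟨q, hq⟩ : ∃ q : ℤ, (g ^ q) y1 = y2 := by
      have : y2 ∈ orbit g y1 := by rw [orbit_eq_of_mem hy1]; exact hy2
      exact this
    have hc2 : cls g a x2 = cls g a x1 + (p : ZMod 3) := by
      rw [← hp]; exact cls_zpow h3a hx1 p
    have hc3 : cls g b y2 = cls g b y1 + (q : ZMod 3) := by
      rw [← hq]; exact cls_zpow h3b hy1 q
    have hpq : ((p - q : ℤ) : ZMod 3) = 0 := by
      rw [hc2, hc3] at hcls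
      push_cast
      linear_combination hcls
    have hdvd3 : (3:ℤ) ∣ p - q := (ZMod.intCast_zmod_eq_zero_iff_dvd _ 3).1 hpq
    have hg : Nat.gcd (sp g x1) (sp g y1) = 3 := by
      rw [sp_eq_of_mem_orbit hx1, sp_eq_of_mem_orbit hy1]; exact hgcd hAB
    have := transfer hxy (p := p) (q := q) (by rw [hg]; exact_mod_cast hdvd3)
    rwa [hp, hq] at this
  -- class transfer, B-below-A direction
  have ctBA : A ≠ B → ∀ x1 ∈ A, ∀ y1 ∈ B, y1 ≤ x1 → ∀ x2 ∈ A, ∀ y2 ∈ B,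
      cls g a x2 - cls g b y2 = cls g a x1 - cls g b y1 → y2 ≤ x2 := by
    intro hAB x1 hx1 y1 hy1 hxy x2 hx2 y2 hy2 hcls
    obtain ⟨p, hp⟩ : ∃ p : ℤ, (g ^ p) x1 = x2 := by
      have : x2 ∈ orbit g x1 := by rw [orbit_eq_of_mem hx1]; exact hx2
      exact this
    obtain ⟨q, hq⟩ : ∃ q : ℤ, (g ^ q) y1 = y2 := by
      have : y2 ∈ orbit g y1 := by rw [orbit_eq_of_mem hy1]; exact hy2
      exact this
    have hc2 : cls g a x2 = cls g a x1 + (p : ZMod 3) := by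
      rw [← hp]; exact cls_zpow h3a hx1 p
    have hc3 : cls g b y2 = cls g b y1 + (q : ZMod 3) := by
      rw [← hq]; exact cls_zpow h3b hy1 q
    have hpq : ((q - p : ℤ) : ZMod 3) = 0 := by
      rw [hc2, hc3] at hcls
      push_cast
      linear_combination -hcls
    have hdvd3 : (3:ℤ) ∣ q - p := (ZMod.intCast_zmod_eq_zero_iff_dvd _ 3).1 hpq
    have hg : Nat.gcd (sp g y1) (sp g x1) = 3 := by
      rw [sp_eq_of_mem_orbit hx1, sp_eq_of_mem_orbit hy1, Nat.gcd_comm]; exact hgcd hAB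
    have := transfer hxy (p := q) (q := p) (by rw [hg]; exact_mod_cast hdvd3)
    rwa [hp, hq] at this
  -- not both directions of comparability across the two orbits
  have notboth : A ≠ B → ∀ x1 ∈ A, ∀ y1 ∈ B, x1 ≤ y1 → ∀ x2 ∈ A, ∀ y2 ∈ B, y2 ≤ x2 → False := by
    intro hAB x1 hx1 y1 hy1 hxy x2 hx2 y2 hy2 hyx
    set r : ℤ := (((cls g a x2 - (cls g a x1 - cls g b y1) - cls g b y2).val : ℕ) : ℤ) with hr
    set y' : P := (g ^ r) y2 with hy'
    have hy'B : y' ∈ B := by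
      rw [hB, ← orbit_eq_of_mem hy2]; exact mem_orbit_zpow g y2 r
    have hclsy' : cls g b y' = cls g a x2 - (cls g a x1 - cls g b y1) := by
      rw [hy', cls_zpow h3b hy2 r, hr]
      rw [Int.cast_natCast, ZMod.natCast_rightInverse _]
      ring
    have hcomp : x2 ≤ y' := by
      refine ctAB hAB x1 hx1 y1 hy1 hxy x2 hx2 y' hy'B ?_
      rw [hclsy']; ring
    have hyy' : y2 ≤ y' := le_trans hyx hcomp
    have : y2 = y' := eq_of_le_same_orbit hyy' (by rw [orbit_eq_of_mem hy2]; exact hy'B)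
    rw [← this] at hcomp
    have hx2y2 : x2 = y2 := le_antisymm hcomp hyx
    apply hAB
    rw [hA, ← orbit_eq_of_mem hx2, hx2y2, orbit_eq_of_mem hy2]
  -- choose the reflection offset t
  set SA : Set (ZMod 3) := {s | ∃ x ∈ A, ∃ y ∈ B, x ≤ y ∧ cls g a x - cls g b y = s} with hSAdef
  set SB : Set (ZMod 3) := {s | ∃ x ∈ A, ∃ y ∈ B, y ≤ x ∧ cls g a x - cls g b y = s} with hSBdef
  obtain ⟨t, hta, htb⟩ : ∃ t : ZMod 3, (∀ s ∈ SA, t - s ∈ SA) ∧ (∀ s ∈ SB, t - s ∈ SB) := by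
    by_cases hAB : A = B
    · have hss : SA = SB := by
        ext s
        constructor
        · rintro ⟨x, hx, y, hy, hxy, rfl⟩
          have hyx : x = y := eq_of_le_same_orbit hxy
            (by rw [orbit_eq_of_mem hx, ← hA, hAB]; exact hy)
          exact ⟨x, hx, y, hy, le_of_eq hyx.symm, rfl⟩
        · rintro ⟨x, hx, y, hy, hxy, rfl⟩
          have hyx : y = x := eq_of_le_same_orbit hxy
            (by rw [orbit_eq_of_mem (show y ∈ orbit g a from by rw [← hA, hAB]; exact hy)]
                exact hx)
          exact ⟨x, hx, y, hy, le_of_eq hyx.symm, rfl⟩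
      obtain ⟨t, ht⟩ := exists_refl SA
      exact ⟨t, ht, by rw [← hss]; exact ht⟩
    · by_cases hSAe : SA.Nonempty
      · have hSBe : ¬ SB.Nonempty := by
          rintro ⟨s2, x2, hx2, y2, hy2, hyx, _⟩
          obtain ⟨s1, x1, hx1, y1, hy1, hxy, _⟩ := hSAe
          exact notboth hAB x1 hx1 y1 hy1 hxy x2 hx2 y2 hy2 hyx
        obtain ⟨t, ht⟩ := exists_refl SA
        exact ⟨t, ht, fun s hs => absurd ⟨s, hs⟩ hSBe⟩
      · obtain ⟨t, ht⟩ := exists_refl SB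
        exact ⟨t, fun s hs => absurd ⟨s, hs⟩ hSAe, ht⟩
  -- the candidate extra automorphism
  set Φ : P → P := fun x => (g ^ delta g a b t x) x with hΦ
  have hΦap : ∀ x : P, Φ x = (g ^ delta g a b t x) x := fun x => rfl
  have hg0 : ∀ x, x ∉ A → x ∉ B → Φ x = x := by
    intro x hxa hxb
    rw [hΦap, delta_zero hxa hxb, zpow_zero, one_apply]
  have hφorb : ∀ x : P, Φ x ∈ orbit g x := fun x => mem_orbit_zpow g x _
  have hφA : ∀ x ∈ A, Φ x ∈ A := by
    intro x hx
    rw [hA, ← orbit_eq_of_mem (show x ∈ orbit g a from hx)]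
    exact hφorb x
  have hφB : ∀ x ∈ B, Φ x ∈ B := by
    intro x hx
    rw [hB, ← orbit_eq_of_mem (show x ∈ orbit g b from hx)]
    exact hφorb x
  have hnotA : ∀ x, x ∉ A → Φ x ∉ A := by
    intro x hx hc
    apply hx
    have h1 := orbit_eq_of_mem (hφorb x)
    have h2 := orbit_eq_of_mem (show Φ x ∈ orbit g a from hc)
    rw [hA, ← h2, h1]
    exact mem_orbit_self g x
  have hclsφA : ∀ x ∈ A, cls g a (Φ x) = t - cls g a x := by
    intro x hx
    rw [hΦap, cls_zpow h3a hx, delta_cast_a h3a h9a hx]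
    ring
  have hclsφB : ∀ x, x ∉ A → x ∈ B → cls g b (Φ x) = - cls g b x := by
    intro x hxa hx
    rw [hΦap, cls_zpow h3b hx, delta_cast_b h3b h9b hxa hx]
    ring
  have hinvol : ∀ x, Φ (Φ x) = x := by
    intro x
    by_cases hxa : x ∈ A
    · have hfa := hφA x hxa
      have hsum : (sp g x : ℤ) ∣ delta g a b t (Φ x) + delta g a b t x := by
        rw [sp_eq_of_mem_orbit (show x ∈ orbit g a from hxa)]
        apply dvd_combine h3a h9a
        · have hc : ((delta g a b t (Φ x) + delta g a b t x : ℤ) : ZMod 3) = 0 := by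
            push_cast
            rw [delta_cast_a h3a h9a hfa, delta_cast_a h3a h9a hxa, hclsφA x hxa]
            ring
          exact_mod_cast (ZMod.intCast_zmod_eq_zero_iff_dvd _ 3).1 hc
        · exact dvd_add (delta_dvd_a hfa) (delta_dvd_a hxa)
      rw [hΦap (Φ x), hΦap x, ← apply_zpow_add]
      exact (fix_iff_dvd g x _).2 hsum
    · by_cases hxb : x ∈ B
      · have hfb := hφB x hxb
        have hfa : Φ x ∉ A := hnotA x hxa
        have hsum : (sp g x : ℤ) ∣ delta g a b t (Φ x) + delta g a b t x := by
          rw [sp_eq_of_mem_orbit (show x ∈ orbit g b from hxb)]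
          apply dvd_combine h3b h9b
          · have hc : ((delta g a b t (Φ x) + delta g a b t x : ℤ) : ZMod 3) = 0 := by
              push_cast
              rw [delta_cast_b h3b h9b hfa hfb, delta_cast_b h3b h9b hxa hxb, hclsφB x hxa hxb]
              ring
            exact_mod_cast (ZMod.intCast_zmod_eq_zero_iff_dvd _ 3).1 hc
          · exact dvd_add (delta_dvd_b hfa hfb) (delta_dvd_b hxa hxb)
        rw [hΦap (Φ x), hΦap x, ← apply_zpow_add]
        exact (fix_iff_dvd g x _).2 hsum
      · rw [hg0 x hxa hxb, hg0 x hxa hxb]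
  -- divisibility helper for mixed pairs
  have hkey : ∀ (u v : P) (D : ℤ), 3 ∣ sp g u → ¬ 3 ∣ sp g v →
      ((sp g u / 3 : ℕ) : ℤ) ∣ D → ((Nat.gcd (sp g u) (sp g v)) : ℤ) ∣ D := by
    intro u v D h3u h3v hD
    have hd1 : Nat.gcd (sp g u) (sp g v) ∣ sp g u / 3 := by
      apply nat_div3 (Nat.gcd_dvd_left _ _) h3u
      intro hc
      exact h3v (dvd_trans hc (Nat.gcd_dvd_right _ _))
    exact dvd_trans (by exact_mod_cast hd1) hD
  have hmono : ∀ x y : P, x ≤ y → Φ x ≤ Φ y := by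
    intro x y hxy
    by_cases hsame : y ∈ orbit g x
    · rw [eq_of_le_same_orbit hxy hsame]
    · by_cases hxa : x ∈ A
      · by_cases hya : y ∈ A
        · exact absurd (by rw [orbit_eq_of_mem (show x ∈ orbit g a from hxa)]; exact hya) hsame
        · by_cases hyb : y ∈ B
          · -- reflection case A → B
            have hAB : A ≠ B := by
              intro h
              exact hya (h.symm ▸ hyb)
            obtain ⟨u, hu, v, hv, huv, hcls⟩ := hta _ ⟨x, hxa, y, hyb, hxy, rfl⟩
            refine ctAB hAB u hu v hv huv (Φ x) (hφA x hxa) (Φ y) (hφB y hyb) ?_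
            rw [hclsφA x hxa, hclsφB y hya hyb, hcls]
            ring
          · -- y outside both
            have h3y : ¬ 3 ∣ sp g y := by
              intro h
              rcases hcov y h with h' | h'
              · exact hya h'
              · exact hyb h'
            rw [hΦap, hΦap]
            apply transfer hxy
            rw [delta_zero hya hyb, sub_zero]
            apply hkey x y _ (by rw [sp_eq_of_mem_orbit (show x ∈ orbit g a from hxa)]; exact h3a) h3y
            rw [sp_eq_of_mem_orbit (show x ∈ orbit g a from hxa)]
            exact delta_dvd_a hxa
      · by_cases hxb : x ∈ B
        · by_cases hyb : y ∈ B
          · exact absurd (by rw [orbit_eq_of_mem (show x ∈ orbit g b from hxb)]; exact hyb) hsame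
          · by_cases hya : y ∈ A
            · -- reflection case B → A
              have hAB : A ≠ B := by
                intro h
                exact hxa (h.symm ▸ hxb)
              obtain ⟨u, hu, v, hv, hvu, hcls⟩ := htb _ ⟨y, hya, x, hxb, hxy, rfl⟩
              refine ctBA hAB u hu v hv hvu (Φ y) (hφA y hya) (Φ x) (hφB x hxb) ?_
              rw [hclsφA y hya, hclsφB x hxa hxb, hcls]
              ring
            · -- y outside both
              have h3y : ¬ 3 ∣ sp g y := by
                intro h
                rcases hcov y h with h' | h'
                · exact hya h'
                · exact hyb h'
              rw [hΦap, hΦap]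
              apply transfer hxy
              rw [delta_zero hya hyb, sub_zero]
              apply hkey x y _ (by rw [sp_eq_of_mem_orbit (show x ∈ orbit g b from hxb)]; exact h3b) h3y
              rw [sp_eq_of_mem_orbit (show x ∈ orbit g b from hxb)]
              exact delta_dvd_b hxa hxb
        · -- x outside both
          have h3x : ¬ 3 ∣ sp g x := by
            intro h
            rcases hcov x h with h' | h'
            · exact hxa h'
            · exact hxb h'
          by_cases hya : y ∈ A
          · rw [hΦap, hΦap]
            apply transfer hxy
            rw [delta_zero hxa hxb, zero_sub]
            rw [Nat.gcd_comm, dvd_neg]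
            apply hkey y x _ (by rw [sp_eq_of_mem_orbit (show y ∈ orbit g a from hya)]; exact h3a) h3x
            rw [sp_eq_of_mem_orbit (show y ∈ orbit g a from hya)]
            exact delta_dvd_a hya
          · by_cases hyb : y ∈ B
            · rw [hΦap, hΦap]
              apply transfer hxy
              rw [delta_zero hxa hxb, zero_sub]
              rw [Nat.gcd_comm, dvd_neg]
              apply hkey y x _ (by rw [sp_eq_of_mem_orbit (show y ∈ orbit g b from hyb)]; exact h3b) h3x
              rw [sp_eq_of_mem_orbit (show y ∈ orbit g b from hyb)]
              exact delta_dvd_b hya hyb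
            · rw [hg0 x hxa hxb, hg0 y hya hyb]
              exact hxy
  -- assemble the order isomorphism
  set ψ : P ≃o P :=
    { toFun := Φ
      invFun := Φ
      left_inv := hinvol
      right_inv := hinvol
      map_rel_iff' := by
        intro x y
        simp only [Equiv.coe_fn_mk]
        constructor
        · intro h
          have h2 := hmono _ _ h
          rwa [hinvol, hinvol] at h2
        · exact hmono x y } with hψ
  have hψap : ∀ x : P, ψ x = Φ x := fun x => rfl
  obtain ⟨m, hm⟩ := hgen ψ
  have hgm : ∀ x : P, (g ^ m) x = Φ x := by
    intro x
    rw [← hψap, hm]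
  -- derive the contradiction on the orbit of a
  have e1 : (sp g a : ℤ) ∣ delta g a b t a - m := by
    rw [← eq_iff_dvd_sub]
    rw [← hΦap]
    exact (hgm a).symm
  set a' : P := (g ^ (1:ℤ)) a with ha'
  have ha'A : a' ∈ A := mem_orbit_zpow g a 1
  have e2 : (sp g a : ℤ) ∣ (delta g a b t a' + 1) - (m + 1) := by
    rw [← eq_iff_dvd_sub]
    have h1 : (g ^ (delta g a b t a' + 1)) a = Φ a' := by
      rw [hΦap, ha', ← apply_zpow_add]
    have h2 : (g ^ (m + 1)) a = (g ^ m) a' := by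
      rw [ha', ← apply_zpow_add]
    rw [h1, h2, hgm a']
  have e3 : (3 : ℤ) ∣ delta g a b t a - delta g a b t a' := by
    have hd : (sp g a : ℤ) ∣ delta g a b t a - delta g a b t a' := by
      have := dvd_sub e1 e2
      have heq : delta g a b t a - m - (delta g a b t a' + 1 - (m + 1)) =
          delta g a b t a - delta g a b t a' := by ring
      rwa [heq] at this
    exact dvd_trans (by exact_mod_cast h3a) hd
  have e4 : ((delta g a b t a - delta g a b t a' : ℤ) : ZMod 3) = 0 :=
    (ZMod.intCast_zmod_eq_zero_iff_dvd _ 3).2 e3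
  have hclsa : cls g a a = 0 := cls_self h3a
  have hclsa' : cls g a a' = 1 := by
    rw [ha', cls_zpow h3a (mem_orbit_self g a) 1, hclsa]
    norm_num
  rw [Int.cast_sub, delta_cast_a h3a h9a (mem_orbit_self g a),
    delta_cast_a h3a h9a ha'A, hclsa, hclsa'] at e4
  have : (1 : ZMod 3) = 0 ∨ (2 : ZMod 3) = 0 → False := by decide
  apply this
  right
  linear_combination e4


section NT

lemma pow5_ge (k : ℕ) (hk : 1 ≤ k) : k + 2 ≤ 5 ^ k := by
  induction k with
  | zero => omega
  | succ i ih =>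
      rcases Nat.eq_or_lt_of_le hk with h | h
      · simp [← h]
      · have h1 : 1 ≤ i := by omega
        have := ih h1
        have h5 : 5 ^ (i+1) = 5 * 5 ^ i := by ring
        omega

lemma le_two_pow_pred (k : ℕ) : k ≤ 2 ^ (k - 1) := by
  rcases Nat.eq_zero_or_pos k with rfl | hk
  · simp
  · have h := Nat.lt_two_pow_self (n := k - 1)
    omega

lemma prime_ge5 {p : ℕ} (hp : p.Prime) (h2 : p ≠ 2) (h3 : p ≠ 3) : 5 ≤ p := by
  by_contra h
  have hge := hp.two_le
  interval_cases p
  · exact h2 rfl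
  · exact h3 rfl
  · exact absurd hp (by decide)

lemma NT_bound {l p c : ℕ} (hl : 0 < l) (hp : p ∈ l.primeFactors)
    (hc : ∀ q ∈ l.primeFactors, q ≠ p → c ≤ q) :
    p * c ^ (l.primeFactors.card - 1) ≤ l := by
  have h1 : ∏ q ∈ l.primeFactors, q ∣ l := Nat.prod_primeFactors_dvd l
  have h2 : ∏ q ∈ l.primeFactors, q = p * ∏ q ∈ l.primeFactors.erase p, q :=
    (Finset.mul_prod_erase _ _ hp).symm
  have h3 : c ^ (l.primeFactors.card - 1) ≤ ∏ q ∈ l.primeFactors.erase p, q := by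
    have h4 := Finset.pow_card_le_prod (l.primeFactors.erase p) (fun q => q) c
      (fun q hq => hc q (Finset.mem_of_mem_erase hq) (Finset.ne_of_mem_erase hq))
    rwa [Finset.card_erase_of_mem hp] at h4
  calc p * c ^ (l.primeFactors.card - 1) ≤ p * ∏ q ∈ l.primeFactors.erase p, q :=
        Nat.mul_le_mul_left p h3
    _ = ∏ q ∈ l.primeFactors, q := h2.symm
    _ ≤ l := Nat.le_of_dvd hl h1

lemma prod_ne3_ge (S : Finset ℕ) (hS : ∀ q ∈ S, q.Prime ∧ q ≠ 3) (hk : 1 ≤ S.card) :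
    2 * 5 ^ (S.card - 1) ≤ ∏ q ∈ S, q := by
  by_cases h2 : 2 ∈ S
  · have he : ∏ q ∈ S, q = 2 * ∏ q ∈ S.erase 2, q := (Finset.mul_prod_erase _ _ h2).symm
    have h5 : 5 ^ (S.card - 1) ≤ ∏ q ∈ S.erase 2, q := by
      have h4 := Finset.pow_card_le_prod (S.erase 2) (fun q => q) 5
        (fun q hq => prime_ge5 (hS q (Finset.mem_of_mem_erase hq)).1
          (Finset.ne_of_mem_erase hq) (hS q (Finset.mem_of_mem_erase hq)).2)
      rwa [Finset.card_erase_of_mem h2] at h4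
    rw [he]
    exact Nat.mul_le_mul_left 2 h5
  · have h5 : 5 ^ S.card ≤ ∏ q ∈ S, q :=
      Finset.pow_card_le_prod S (fun q => q) 5
        (fun q hq => prime_ge5 (hS q hq).1 (fun h => h2 (h ▸ hq)) (hS q hq).2)
    have : 2 * 5 ^ (S.card - 1) ≤ 5 ^ S.card := by
      have h6 : 5 ^ S.card = 5 * 5 ^ (S.card - 1) := by
        rw [← pow_succ']
        congr 1
        omega
      rw [h6]
      have : 0 < 5 ^ (S.card - 1) := pow_pos (by norm_num) _
      omega
    omega

end NT

section Wlem

variable {n : ℕ} (h3n : ExactDvd 3 n) (h2n : ExactDvd 2 n) (hn : 1 ≤ n)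

lemma nine_not_dvd (h3n : ExactDvd 3 n) : ¬ 9 ∣ n := by
  have := h3n.2
  have e : (3 : ℕ) * Nat.minFac 3 = 9 := by norm_num
  rwa [e] at this

lemma four_not_dvd (h2n : ExactDvd 2 n) : ¬ 4 ∣ n := by
  have := h2n.2
  have e : (2 : ℕ) * Nat.minFac 2 = 4 := rfl
  rwa [e] at this

lemma w_nonneg (n l q : ℕ) : 0 ≤ w n l q := by
  unfold w
  split_ifs <;> positivity

lemma w3_six (h3n : ExactDvd 3 n) : w n 6 3 = 2 := by
  unfold w
  rw [if_pos rfl, if_pos h3n, if_pos rfl]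

lemma w2_six (h3n : ExactDvd 3 n) : w n 6 2 = 0 := by
  unfold w
  rw [if_pos rfl, if_pos h3n, if_neg (by norm_num)]

lemma w3_min {l : ℕ} (h3n : ExactDvd 3 n) (h2n : ExactDvd 2 n) (hn : 1 ≤ n)
    (hl3 : 3 ∣ l) (hln : l ∣ n) : (3:ℚ) ≤ 3 * w n l 3 := by
  have hn9 := nine_not_dvd h3n
  have hn4 := four_not_dvd h2n
  have hl0 : 0 < l := by
    rcases Nat.eq_zero_or_pos l with rfl | h
    · exact absurd (Nat.eq_zero_of_zero_dvd hln) (by omega)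
    · exact h
  have hl3' : 3 ≤ l := Nat.le_of_dvd hl0 hl3
  by_cases h6 : l = 6
  · subst h6
    rw [w3_six h3n]
    norm_num
  · unfold w
    have h12 : l ≠ 12 := by
      rintro rfl
      exact hn4 (dvd_trans (by norm_num) hln)
    have h10 : l ≠ 10 := by rintro rfl; omega
    have h14 : l ≠ 14 := by rintro rfl; omega
    rw [if_neg h6, if_neg h12, if_neg h10, if_neg h14]
    have hnine : ¬ (9 ∣ l) := fun h => hn9 (dvd_trans h hln)
    have hcond : IsPrimePow 3 ∧ ExactDvd 3 l ∧ ¬ ((3:ℕ) = 2 ∧ ¬ ExactDvd 2 n) := by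
      refine ⟨Nat.Prime.isPrimePow (by norm_num), ⟨hl3, ?_⟩, by norm_num⟩
      have e : (3 : ℕ) * Nat.minFac 3 = 9 := by norm_num
      rw [e]
      exact hnine
    rw [if_pos hcond]
    set k := l.primeFactors.card with hk
    have hk1 : 1 ≤ k := Finset.card_pos.2 (Nat.nonempty_primeFactors.2 (by omega))
    have h3mem : 3 ∈ l.primeFactors := Nat.mem_primeFactors.2 ⟨by norm_num, hl3, by omega⟩
    have hnt : 3 * 2 ^ (k-1) ≤ l :=
      NT_bound hl0 h3mem (fun q hq _ => (Nat.prime_of_mem_primeFactors hq).two_le)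
    have h3k : 3 * k ≤ l := by
      have := le_two_pow_pred k
      nlinarith
    have hkQ : (0:ℚ) < (k:ℚ) := by exact_mod_cast hk1
    have h1 : (1:ℚ) ≤ ((l:ℚ)/3)/(k:ℚ) := by
      rw [div_div, le_div_iff₀ (by positivity)]
      have : (3:ℚ) * (k:ℚ) ≤ (l:ℚ) := by exact_mod_cast h3k
      linarith
    linarith

lemma w2_min {l : ℕ} (h2n : ExactDvd 2 n) (hn : 1 ≤ n)
    (hl2 : 2 ∣ l) (hln : l ∣ n) (hl6 : l ≠ 6) : (2:ℚ) ≤ 2 * w n l 2 := by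
  have hn4 := four_not_dvd h2n
  have hl0 : 0 < l := by
    rcases Nat.eq_zero_or_pos l with rfl | h
    · exact absurd (Nat.eq_zero_of_zero_dvd hln) (by omega)
    · exact h
  unfold w
  have h12 : l ≠ 12 := by
    rintro rfl
    exact hn4 (dvd_trans (by norm_num) hln)
  by_cases h10 : l = 10
  · rw [if_neg hl6, if_neg h12, if_pos h10, if_neg (by norm_num), if_pos h2n, if_pos rfl]
    norm_num
  by_cases h14 : l = 14
  · rw [if_neg hl6, if_neg h12, if_neg h10, if_pos h14, if_neg (by norm_num), if_pos h2n,
      if_pos rfl]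
    norm_num
  rw [if_neg hl6, if_neg h12, if_neg h10, if_neg h14]
  have hfour : ¬ (4 ∣ l) := fun h => hn4 (dvd_trans h hln)
  have hcond : IsPrimePow 2 ∧ ExactDvd 2 l ∧ ¬ ((2:ℕ) = 2 ∧ ¬ ExactDvd 2 n) := by
    refine ⟨Nat.Prime.isPrimePow (by norm_num), ⟨hl2, ?_⟩, by simp [h2n]⟩
    have e : (2 : ℕ) * Nat.minFac 2 = 4 := rfl
    rw [e]
    exact hfour
  rw [if_pos hcond]
  set k := l.primeFactors.card with hk
  have hl2' : 2 ≤ l := Nat.le_of_dvd hl0 hl2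
  have hk1 : 1 ≤ k := Finset.card_pos.2 (Nat.nonempty_primeFactors.2 (by omega))
  have h2mem : 2 ∈ l.primeFactors := Nat.mem_primeFactors.2 ⟨by norm_num, hl2, by omega⟩
  have hnt : 2 * 3 ^ (k-1) ≤ l := by
    refine NT_bound hl0 h2mem (fun q hq hne => ?_)
    have := (Nat.prime_of_mem_primeFactors hq).two_le
    omega
  have h2k : 2 * k ≤ l := by
    have ha := le_two_pow_pred k
    have hb : (2:ℕ) ^ (k-1) ≤ 3 ^ (k-1) := Nat.pow_le_pow_left (by norm_num) _
    nlinarith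
  have hkQ : (0:ℚ) < (k:ℚ) := by exact_mod_cast hk1
  have h1 : (1:ℚ) ≤ ((l:ℚ)/2)/(k:ℚ) := by
    rw [div_div, le_div_iff₀ (by positivity)]
    have : (2:ℚ) * (k:ℚ) ≤ (l:ℚ) := by exact_mod_cast h2k
    linarith
  linarith

lemma w3_big {l q : ℕ} (h3n : ExactDvd 3 n) (h2n : ExactDvd 2 n) (hn : 1 ≤ n)
    (hq : 3 * q ∣ l) (hq2 : 2 ≤ q) (hln : l ∣ n) : (11/2:ℚ) ≤ 3 * w n l 3 := by
  have hn9 := nine_not_dvd h3n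
  have hn4 := four_not_dvd h2n
  have hl0 : 0 < l := by
    rcases Nat.eq_zero_or_pos l with rfl | h
    · exact absurd (Nat.eq_zero_of_zero_dvd hln) (by omega)
    · exact h
  have hl3 : 3 ∣ l := dvd_trans (dvd_mul_right 3 q) hq
  have hl6' : 6 ≤ l := le_trans (by omega) (Nat.le_of_dvd hl0 hq)
  by_cases h6 : l = 6
  · subst h6
    rw [w3_six h3n]
    norm_num
  · unfold w
    have h12 : l ≠ 12 := by
      rintro rfl
      exact hn4 (dvd_trans (by norm_num) hln)
    have h10 : l ≠ 10 := by rintro rfl; omega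
    have h14 : l ≠ 14 := by rintro rfl; omega
    rw [if_neg h6, if_neg h12, if_neg h10, if_neg h14]
    have hnine : ¬ (9 ∣ l) := fun h => hn9 (dvd_trans h hln)
    have hfour : ¬ (4 ∣ l) := fun h => hn4 (dvd_trans h hln)
    have hcond : IsPrimePow 3 ∧ ExactDvd 3 l ∧ ¬ ((3:ℕ) = 2 ∧ ¬ ExactDvd 2 n) := by
      refine ⟨Nat.Prime.isPrimePow (by norm_num), ⟨hl3, ?_⟩, by norm_num⟩
      have e : (3 : ℕ) * Nat.minFac 3 = 9 := by norm_num
      rw [e]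
      exact hnine
    rw [if_pos hcond]
    set k := l.primeFactors.card with hk
    -- the second prime
    set p := q.minFac with hp
    have hq0 : q ≠ 1 := by omega
    have hpp : p.Prime := Nat.minFac_prime hq0
    have hpdl : p ∣ l := dvd_trans (dvd_trans (Nat.minFac_dvd q) (dvd_mul_left q 3)) hq
    have hp3 : p ≠ 3 := by
      intro h
      apply hnine
      obtain ⟨c, hc⟩ := Nat.minFac_dvd q
      obtain ⟨d, hd⟩ := hq
      exact ⟨c * d, by rw [hd, hc, show q.minFac = 3 from by rw [← hp, h]]; ring⟩
    have h3mem : 3 ∈ l.primeFactors := Nat.mem_primeFactors.2 ⟨by norm_num, hl3, by omega⟩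
    have hpmem : p ∈ l.primeFactors := Nat.mem_primeFactors.2 ⟨hpp, hpdl, by omega⟩
    have hsub : ({3, p} : Finset ℕ) ⊆ l.primeFactors := by
      intro r hr
      rcases Finset.mem_insert.1 hr with rfl | hr
      · exact h3mem
      · rw [Finset.mem_singleton.1 hr]; exact hpmem
    have hk2 : 2 ≤ k := by
      have hcard : ({3, p} : Finset ℕ).card = 2 := by
        rw [Finset.card_insert_of_notMem (by simp [Ne.symm hp3]), Finset.card_singleton]
      rw [hk, ← hcard]
      exact Finset.card_le_card hsub
    -- main counting bound : 11 * k ≤ 2 * l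
    have h11 : 11 * k ≤ 2 * l := by
      rcases Nat.eq_or_lt_of_le hk2 with hk2' | hk3
      · -- k = 2
        by_cases h2mem : 2 ∈ l.primeFactors
        · -- l = 6, contradiction
          exfalso
          have hsub2 : ({2, 3} : Finset ℕ) ⊆ l.primeFactors := by
            intro r hr
            rcases Finset.mem_insert.1 hr with rfl | hr
            · exact h2mem
            · rw [Finset.mem_singleton.1 hr]; exact h3mem
          have heq : ({2, 3} : Finset ℕ) = l.primeFactors := by
            apply Finset.eq_of_subset_of_card_le hsub2
            rw [← hk, ← hk2']
            decide
          have h6dvd : 6 ∣ l := by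
            have : Nat.Coprime 2 3 := by decide
            exact (Nat.Coprime.mul_dvd_of_dvd_of_dvd this
              (Nat.dvd_of_mem_primeFactors h2mem) hl3 : 2 * 3 ∣ l)
          obtain ⟨m, hm⟩ := h6dvd
          have hm1 : m ≠ 1 := by omega
          have hm0 : m ≠ 0 := by omega
          have hmp : m.minFac.Prime := Nat.minFac_prime hm1
          have hmem : m.minFac ∈ l.primeFactors :=
            Nat.mem_primeFactors.2 ⟨hmp, dvd_trans (Nat.minFac_dvd m) ⟨6, by omega⟩, by omega⟩
          rw [← heq] at hmem
          rcases Finset.mem_insert.1 hmem with h' | h'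
          · apply hfour
            obtain ⟨c, hc⟩ := Nat.minFac_dvd m
            exact ⟨3 * c, by rw [hm, hc, h']; ring⟩
          · apply hnine
            rw [Finset.mem_singleton] at h'
            obtain ⟨c, hc⟩ := Nat.minFac_dvd m
            exact ⟨2 * c, by rw [hm, hc, h']; ring⟩
        · -- second prime ≥ 5, l ≥ 15
          have hnt : 3 * 5 ^ (k-1) ≤ l := by
            refine NT_bound hl0 h3mem (fun r hr hne => ?_)
            exact prime_ge5 (Nat.prime_of_mem_primeFactors hr)
              (fun h => h2mem (h ▸ hr)) hne
          have hkk : k = 2 := hk2'.symm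
          rw [hkk] at hnt
          norm_num at hnt
          rw [hkk]
          omega
      · -- k ≥ 3
        have hT : ∀ r ∈ l.primeFactors.erase 3, r.Prime ∧ r ≠ 3 := fun r hr =>
          ⟨Nat.prime_of_mem_primeFactors (Finset.mem_of_mem_erase hr), Finset.ne_of_mem_erase hr⟩
        have hTk : (l.primeFactors.erase 3).card = k - 1 := by
          rw [Finset.card_erase_of_mem h3mem]
        have hprod : 2 * 5 ^ (k - 2) ≤ ∏ r ∈ l.primeFactors.erase 3, r := by
          have := prod_ne3_ge (l.primeFactors.erase 3) hT (by omega)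
          rwa [hTk, show k - 1 - 1 = k - 2 from by omega] at this
        have hl' : 3 * (2 * 5 ^ (k-2)) ≤ l := by
          calc 3 * (2 * 5 ^ (k-2)) ≤ 3 * ∏ r ∈ l.primeFactors.erase 3, r :=
                Nat.mul_le_mul_left 3 hprod
            _ = ∏ r ∈ l.primeFactors, r := Finset.mul_prod_erase _ (fun r => r) h3mem
            _ ≤ l := Nat.le_of_dvd hl0 (Nat.prod_primeFactors_dvd l)
        have h5k : k ≤ 5 ^ (k - 2) := by
          have := pow5_ge (k - 2) (by omega)
          omega
        nlinarith
    have hk1 : 1 ≤ k := by omega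
    have hkQ : (0:ℚ) < (k:ℚ) := by exact_mod_cast hk1
    have h11Q : (11:ℚ) * (k:ℚ) ≤ 2 * (l:ℚ) := by exact_mod_cast h11
    have h1 : (11/6:ℚ) ≤ ((l:ℚ)/3)/(k:ℚ) := by
      rw [div_div, le_div_iff₀ (by positivity)]
      linarith
    linarith

end Wlem

end WTT


/-- (Theorem 4.1, third case.) Let `P` be a finite poset with `Aut(P)` cyclic of order
`n ≥ 1` generated by `g`. If `3 ∥ n` and `2 ∥ n` then
`Σ_{α ∈ g} (2·w₂(α) + 3·w₃(α)) ≥ 11`. -/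
theorem weight_sum_two_three (n : ℕ) (hn : 1 ≤ n)
    (P : Type) [PartialOrder P] [Fintype P] (g : P ≃o P)
    (hord : orderOf g = n) (hgen : ∀ φ : P ≃o P, ∃ m : ℤ, g ^ m = φ)
    (h3 : ExactDvd 3 n) (h2 : ExactDvd 2 n) :
    (11 : ℚ) ≤ ∑ᶠ A ∈ cycles g, (2 * w n A.ncard 2 + 3 * w n A.ncard 3) := by
  classical
  have hn9 := WTT.nine_not_dvd h3
  have hn4 := WTT.four_not_dvd h2
  have h3n : 3 ∣ n := h3.1
  have h2n : 2 ∣ n := h2.1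
  -- basic facts about periods
  have hgz : g ^ (n:ℤ) = 1 := by rw [zpow_natCast, ← hord, pow_orderOf_eq_one]
  have hfixn : ∀ x : P, (g ^ (n:ℤ)) x = x := fun x => by rw [hgz]; exact WTT.one_apply x
  have hspd : ∀ x : P, WTT.sp g x ∣ n := fun x => by
    have := (WTT.fix_iff_dvd g x n).1 (hfixn x)
    exact_mod_cast this
  have h9sp : ∀ x : P, ¬ 9 ∣ WTT.sp g x := fun x h => hn9 (h.trans (hspd x))
  -- existence of orbits with 3 ∣ length resp. 2 ∣ length
  have hexgen : ∀ p : ℕ, p.Prime → p ∣ n → ∃ x : P, p ∣ WTT.sp g x := by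
    intro p hp hpn
    by_contra hc
    push_neg at hc
    have hone : g ^ (n/p : ℕ) = 1 := by
      apply DFunLike.ext
      intro x
      have hall : (g ^ ((n/p : ℕ) : ℤ)) x = x := by
        apply (WTT.fix_iff_dvd g x _).2
        have hsp3 : WTT.sp g x ∣ n / p := by
          have hd := hspd x
          have hcop : Nat.Coprime (WTT.sp g x) p :=
            Nat.Coprime.symm ((Nat.Prime.coprime_iff_not_dvd hp).2 (hc x))
          have hnp : n = (n/p) * p := by
            rw [Nat.div_mul_cancel hpn]
          exact hcop.dvd_of_dvd_mul_right (by rw [← hnp]; exact hd)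
        exact_mod_cast Int.natCast_dvd_natCast.2 hsp3
      rwa [zpow_natCast] at hall
    have hdvd := orderOf_dvd_of_pow_eq_one hone
    rw [hord] at hdvd
    have hp2 := hp.two_le
    have hple : p ≤ n := Nat.le_of_dvd (by omega) hpn
    have hnp0 : 0 < n / p := Nat.div_pos hple (by omega)
    have hle := Nat.le_of_dvd hnp0 hdvd
    have : n / p < n := Nat.div_lt_self (by omega) (by omega)
    omega
  obtain ⟨x3, hx3⟩ := hexgen 3 (by norm_num) h3n
  obtain ⟨x2, hx2⟩ := hexgen 2 (by norm_num) h2n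
  -- sum machinery
  have hfin : (cycles g).Finite := Set.toFinite _
  rw [finsum_mem_eq_finite_toFinset_sum _ hfin]
  have hstep : ∀ T : Finset (Set P), (∀ A ∈ T, A ∈ cycles g) →
      (11:ℚ) ≤ ∑ A ∈ T, (2 * w n A.ncard 2 + 3 * w n A.ncard 3) →
      (11:ℚ) ≤ ∑ A ∈ hfin.toFinset, (2 * w n A.ncard 2 + 3 * w n A.ncard 3) := by
    intro T hT hbound
    refine le_trans hbound (Finset.sum_le_sum_of_subset_of_nonneg ?_ ?_)
    · intro A hA
      rw [Set.Finite.mem_toFinset]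
      exact hT A hA
    · intro A _ _
      have h1 := WTT.w_nonneg n A.ncard 2
      have h2 := WTT.w_nonneg n A.ncard 3
      linarith
  have hmemcyc : ∀ x : P, 2 ≤ WTT.sp g x → orbit g x ∈ cycles g := by
    intro x hx
    exact ⟨⟨x, rfl⟩, by rw [WTT.orbit_ncard]; exact hx⟩
  -- per-orbit bounds
  have hb3 : ∀ x : P, 3 ∣ WTT.sp g x → (3:ℚ) ≤ 3 * w n (orbit g x).ncard 3 := by
    intro x hx
    rw [WTT.orbit_ncard]
    exact WTT.w3_min h3 h2 hn hx (hspd x)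
  have hb2 : ∀ x : P, 2 ∣ WTT.sp g x → WTT.sp g x ≠ 6 →
      (2:ℚ) ≤ 2 * w n (orbit g x).ncard 2 := by
    intro x hx h6
    rw [WTT.orbit_ncard]
    exact WTT.w2_min h2 hn hx (hspd x) h6
  have hbig3 : ∀ x : P, ∀ q : ℕ, 3 * q ∣ WTT.sp g x → 2 ≤ q →
      (11/2:ℚ) ≤ 3 * w n (orbit g x).ncard 3 := by
    intro x q hx hq
    rw [WTT.orbit_ncard]
    exact WTT.w3_big h3 h2 hn hx hq (hspd x)
  have hnn2 : ∀ A : Set P, (0:ℚ) ≤ 2 * w n A.ncard 2 := by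
    intro A
    have := WTT.w_nonneg n A.ncard 2
    linarith
  have hnn3 : ∀ A : Set P, (0:ℚ) ≤ 3 * w n A.ncard 3 := by
    intro A
    have := WTT.w_nonneg n A.ncard 3
    linarith
  have hsp2 : ∀ x : P, 1 ≤ WTT.sp g x := fun x => WTT.sp_pos g x
  -- main case analysis
  by_cases hbig : ∃ xa xb xc : P, 3 ∣ WTT.sp g xa ∧ 3 ∣ WTT.sp g xb ∧ 3 ∣ WTT.sp g xc ∧
      orbit g xa ≠ orbit g xb ∧ orbit g xa ≠ orbit g xc ∧ orbit g xb ≠ orbit g xc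
  · obtain ⟨xa, xb, xc, ha, hb, hc, hab, hac, hbc⟩ := hbig
    set A1 := orbit g xa with hA1
    set A2 := orbit g xb with hA2
    set A3 := orbit g xc with hA3
    have hS3 : ∑ A ∈ ({A1, A2, A3} : Finset (Set P)), (2 * w n A.ncard 2 + 3 * w n A.ncard 3)
        = (2 * w n A1.ncard 2 + 3 * w n A1.ncard 3) + (2 * w n A2.ncard 2 + 3 * w n A2.ncard 3)
          + (2 * w n A3.ncard 2 + 3 * w n A3.ncard 3) := by
      rw [show ({A1, A2, A3} : Finset (Set P)) = insert A1 (insert A2 {A3}) from rfl]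
      rw [Finset.sum_insert (by simp [hab, hac]), Finset.sum_insert (by simp [hbc]),
        Finset.sum_singleton]
      ring
    have hmem3 : ∀ A ∈ ({A1, A2, A3} : Finset (Set P)), A ∈ cycles g := by
      intro A hA
      rcases Finset.mem_insert.1 hA with rfl | hA
      · exact hmemcyc xa (by have := hsp2 xa; omega)
      rcases Finset.mem_insert.1 hA with rfl | hA
      · exact hmemcyc xb (by have := hsp2 xb; omega)
      · rw [Finset.mem_singleton.1 hA]
        exact hmemcyc xc (by have := hsp2 xc; omega)
    by_cases heven : ∃ e : P, 2 ∣ WTT.sp g e ∧ WTT.sp g e ≠ 6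
    · obtain ⟨e, he2, he6⟩ := heven
      set B := orbit g e with hBdef
      have hfB2 : (2:ℚ) ≤ 2 * w n B.ncard 2 := hb2 e he2 he6
      by_cases hBin : B ∈ ({A1, A2, A3} : Finset (Set P))
      · apply hstep {A1, A2, A3} hmem3
        rw [hS3]
        have h1 := hb3 xa ha
        have h2' := hb3 xb hb
        have h3' := hb3 xc hc
        rcases Finset.mem_insert.1 hBin with hEq | hBin
        · rw [hEq] at hfB2
          have := hnn2 A2; have := hnn2 A3
          linarith
        rcases Finset.mem_insert.1 hBin with hEq | hBin
        · rw [hEq] at hfB2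
          have := hnn2 A1; have := hnn2 A3
          linarith
        · rw [Finset.mem_singleton.1 hBin] at hfB2
          have := hnn2 A1; have := hnn2 A2
          linarith
      · apply hstep (insert B {A1, A2, A3})
        · intro A hA
          rcases Finset.mem_insert.1 hA with rfl | hA
          · exact hmemcyc e (by have := hsp2 e; omega)
          · exact hmem3 A hA
        · rw [Finset.sum_insert hBin, hS3]
          have h1 := hb3 xa ha
          have h2' := hb3 xb hb
          have h3' := hb3 xc hc
          have := hnn2 A1; have := hnn2 A2; have := hnn2 A3; have := hnn3 B
          linarith
    · push_neg at heven
      have he6 : WTT.sp g x2 = 6 := heven x2 hx2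
      set B := orbit g x2 with hBdef
      have hfB3 : 3 * w n B.ncard 3 = 6 := by
        rw [hBdef, WTT.orbit_ncard, he6, WTT.w3_six h3]
        norm_num
      by_cases hBin : B ∈ ({A1, A2, A3} : Finset (Set P))
      · apply hstep {A1, A2, A3} hmem3
        rw [hS3]
        have h1 := hb3 xa ha
        have h2' := hb3 xb hb
        have h3' := hb3 xc hc
        rcases Finset.mem_insert.1 hBin with hEq | hBin
        · rw [hEq] at hfB3
          have := hnn2 A1; have := hnn2 A2; have := hnn2 A3
          linarith
        rcases Finset.mem_insert.1 hBin with hEq | hBin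
        · rw [hEq] at hfB3
          have := hnn2 A1; have := hnn2 A2; have := hnn2 A3
          linarith
        · rw [Finset.mem_singleton.1 hBin] at hfB3
          have := hnn2 A1; have := hnn2 A2; have := hnn2 A3
          linarith
      · apply hstep (insert B {A1, A2, A3})
        · intro A hA
          rcases Finset.mem_insert.1 hA with rfl | hA
          · exact hmemcyc x2 (by have := hsp2 x2; omega)
          · exact hmem3 A hA
        · rw [Finset.sum_insert hBin, hS3]
          have h1 := hb3 xa ha
          have h2' := hb3 xb hb
          have h3' := hb3 xc hc
          have := hnn2 A1; have := hnn2 A2; have := hnn2 A3; have := hnn2 B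
          linarith
  · -- at most two orbits with 3 ∣ length
    by_cases hsec : ∃ y : P, 3 ∣ WTT.sp g y ∧ orbit g y ≠ orbit g x3
    · obtain ⟨y0, hy0, hxy0⟩ := hsec
      have hcov : ∀ z : P, 3 ∣ WTT.sp g z → z ∈ orbit g x3 ∨ z ∈ orbit g y0 := by
        intro z hz
        by_contra hcz
        push_neg at hcz
        apply hbig
        refine ⟨z, x3, y0, hz, hx3, hy0, ?_, ?_, fun h => hxy0 h.symm⟩
        · intro h
          exact hcz.1 (by rw [← h]; exact WTT.mem_orbit_self g z)
        · intro h
          exact hcz.2 (by rw [← h]; exact WTT.mem_orbit_self g z)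
      set d := Nat.gcd (WTT.sp g x3) (WTT.sp g y0) with hd
      have hd3 : 3 ∣ d := Nat.dvd_gcd hx3 hy0
      by_cases hdg : d = 3
      · exact absurd (WTT.no_small_three g hgen x3 y0 hx3 (h9sp x3) hy0 (h9sp y0) hcov
          (fun _ => hdg)) not_false
      · have hq2 : 2 ≤ d / 3 := by
          have hd0 : 0 < d := Nat.gcd_pos_of_pos_left _ (by have := hsp2 x3; omega)
          omega
        have hdx : 3 * (d/3) ∣ WTT.sp g x3 := by
          have : 3 * (d/3) = d := by omega
          rw [this]
          exact Nat.gcd_dvd_left _ _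
        have hdy : 3 * (d/3) ∣ WTT.sp g y0 := by
          have : 3 * (d/3) = d := by omega
          rw [this]
          exact Nat.gcd_dvd_right _ _
        apply hstep {orbit g x3, orbit g y0}
        · intro A hA
          rcases Finset.mem_insert.1 hA with rfl | hA
          · exact hmemcyc x3 (by have := hsp2 x3; omega)
          · rw [Finset.mem_singleton.1 hA]
            exact hmemcyc y0 (by have := hsp2 y0; omega)
        · rw [Finset.sum_insert (by simp only [Finset.mem_singleton]; exact fun h => hxy0 h.symm), Finset.sum_singleton]
          have h1 := hbig3 x3 (d/3) hdx hq2
          have h2' := hbig3 y0 (d/3) hdy hq2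
          have := hnn2 (orbit g x3); have := hnn2 (orbit g y0)
          linarith
    · push_neg at hsec
      have hcov : ∀ z : P, 3 ∣ WTT.sp g z → z ∈ orbit g x3 ∨ z ∈ orbit g x3 := by
        intro z hz
        left
        rw [← hsec z hz]
        exact WTT.mem_orbit_self g z
      exact absurd (WTT.no_small_three g hgen x3 x3 hx3 (h9sp x3) hx3 (h9sp x3) hcov
        (fun hne => absurd rfl hne)) not_false
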